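/- arXiv:0906.2249 — 5 statements merged into one kernel-verified Lean document; each statement's English description precedes it below -/
import Mathlib

section
/- Let γ be a closed convex curve in ℝ² (the boundary of a compact convex body) such that γ meets every line in at most two points. Then for any nonzero vector p, the intersection of γ with its translate γ + p contains at most two points. -/
/-!
Call `w` admissible if `w` and `w - p` both lie on `γ`. For admissible `w`, the line `w + ℝp` meets
`K` only in the segment `[w - p, w]`: the ray from `w` in direction `p` leaves the compact set `K`
at a boundary point, which is a third point of `γ` on that line unless it is `w` itself, and
symmetrically for `w - p`. Now order the admissible points by the linear form `f q = q × p`, whose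
fibres are the lines parallel to `p`. If `x, y, z` are admissible and `f y` lies between `f x` and
`f z`, the point `u` of `[x, z]` with `f u = f y` has `u ∈ K` and `u - p ∈ [x - p, z - p] ⊆ K`, and
lies on `y + ℝp`; hence `u = y`. So `y ∈ [x, z]`, and three distinct points of `γ` are never
collinear.
-/

open Set Topology

section
variable {E : Type*} [AddCommGroup E] [Module ℝ E]

def AtMostTwoOnLines (γ : Set E) : Prop :=
  ∀ a v : E, v ≠ 0 →
    ∀ x ∈ γ ∩ {q | ∃ t : ℝ, q = a + t • v}, ∀ y ∈ γ ∩ {q | ∃ t : ℝ, q = a + t • v},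
      ∀ z ∈ γ ∩ {q | ∃ t : ℝ, q = a + t • v}, x = y ∨ x = z ∨ y = z

namespace AtMostTwoOnLines

variable {γ : Set E}

theorem eq_or_eq_or_eq_of_add_smul_mem (hγ : AtMostTwoOnLines γ) {a v : E} (hv : v ≠ 0)
    {r s t : ℝ} (hr : a + r • v ∈ γ) (hs : a + s • v ∈ γ) (ht : a + t • v ∈ γ) :
    r = s ∨ r = t ∨ s = t := by
  have hinj : Function.Injective fun u : ℝ => a + u • v :=
    (add_right_injective a).comp (smul_left_injective ℝ hv)
  simpa only [hinj.eq_iff] using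
    hγ a v hv _ ⟨hr, r, rfl⟩ _ ⟨hs, s, rfl⟩ _ ⟨ht, t, rfl⟩

theorem eq_or_eq_or_eq_of_mem_segment (hγ : AtMostTwoOnLines γ) {x y z : E} (hx : x ∈ γ)
    (hy : y ∈ γ) (hz : z ∈ γ) (hxyz : y ∈ segment ℝ x z) : x = y ∨ x = z ∨ y = z := by
  rcases eq_or_ne z x with rfl | hzx
  · exact Or.inr (Or.inl rfl)
  obtain ⟨θ, -, rfl⟩ := (segment_eq_image' ℝ x z).subset hxyz
  exact hγ x (z - x) (sub_ne_zero.mpr hzx) _ ⟨hx, 0, by simp⟩ _ ⟨hy, θ, rfl⟩ _ ⟨hz, 1, by simp⟩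

end AtMostTwoOnLines
end

section
variable {E : Type*} [NormedAddCommGroup E] [NormedSpace ℝ E] {K : Set E}

theorem IsCompact.exists_isGreatest_add_smul_mem_frontier (hK : IsCompact K) {a v : E}
    (ha : a ∈ K) (hv : v ≠ 0) :
    ∃ s, IsGreatest {t : ℝ | a + t • v ∈ K} s ∧ a + s • v ∈ frontier K := by
  have hline : IsClosedEmbedding fun t : ℝ => a + t • v :=
    (Homeomorph.addLeft a).isClosedEmbedding.comp (isClosedEmbedding_smul_left hv)
  obtain ⟨s, hs⟩ := (hline.isCompact_preimage hK).exists_isGreatest ⟨0, by simpa using ha⟩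
  refine ⟨s, hs, hK.isClosed.frontier_eq ▸ ⟨hs.1, fun hint => ?_⟩⟩
  have hnear : ∀ᶠ t in 𝓝 s, a + t • v ∈ K :=
    hline.continuous.continuousAt.preimage_mem_nhds
      (interior_mem_nhds.mp (isOpen_interior.mem_nhds hint))
  obtain ⟨t, htK, hst⟩ := (hnear.and_frequently (frequently_gt_nhds s)).exists
  exact (hs.2 htK).not_gt hst

namespace AtMostTwoOnLines

variable (hγ : AtMostTwoOnLines (frontier K)) (hK : IsCompact K)
include hγ hK

theorem nonpos_of_add_smul_mem {w p : E} (hp : p ≠ 0) (hw : w ∈ frontier K)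
    (hwp : w - p ∈ frontier K) {t : ℝ} (ht : w + t • p ∈ K) : t ≤ 0 := by
  have hwK := hK.isClosed.frontier_subset hw
  obtain ⟨s, hs, hsK⟩ := hK.exists_isGreatest_add_smul_mem_frontier hwK hp
  have hs0 : 0 ≤ s := hs.2 (by simpa using hwK)
  rcases hγ.eq_or_eq_or_eq_of_add_smul_mem hp (r := -1) (s := 0)
    (by simpa [← sub_eq_add_neg] using hwp) (by simpa using hw) hsK with h | h | rfl
  · norm_num at h
  · linarith
  · exact hs.2 ht

theorem eq_zero_of_add_smul_mem {w p : E} (hp : p ≠ 0) (hw : w ∈ frontier K)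
    (hwp : w - p ∈ frontier K) {t : ℝ} (ht : w + t • p ∈ K) (ht' : w + t • p - p ∈ K) :
    t = 0 := by
  refine le_antisymm (hγ.nonpos_of_add_smul_mem hK hp hw hwp ht) (neg_nonpos.mp ?_)
  refine hγ.nonpos_of_add_smul_mem hK (neg_ne_zero.mpr hp) hwp (by simpa using hw) ?_
  convert ht' using 1
  module

theorem eq_or_eq_or_eq_of_mem_uIcc (hKconv : Convex ℝ K) {p : E} (hp : p ≠ 0)
    {f : E →ₗ[ℝ] ℝ} (hf : LinearMap.ker f ≤ ℝ ∙ p) {x y z : E}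
    (hx : x ∈ frontier K) (hxp : x - p ∈ frontier K) (hy : y ∈ frontier K)
    (hyp : y - p ∈ frontier K) (hz : z ∈ frontier K) (hzp : z - p ∈ frontier K)
    (hfy : f y ∈ uIcc (f x) (f z)) : x = y ∨ x = z ∨ y = z := by
  refine hγ.eq_or_eq_or_eq_of_mem_segment hx hy hz ?_
  have hfK := hK.isClosed.frontier_subset
  obtain ⟨u, hu, hfu⟩ : f y ∈ f '' segment ℝ x z := by
    rwa [← LinearMap.coe_toAffineMap, image_segment, segment_eq_uIcc]
  obtain ⟨t, rfl⟩ : ∃ t : ℝ, y + t • p = u :=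
    ⟨_, add_eq_of_eq_sub' (Submodule.mem_span_singleton.mp (hf (by simp [hfu]))).choose_spec⟩
  have huK : y + t • p ∈ K := hKconv.segment_subset (hfK hx) (hfK hz) hu
  have hupK : y + t • p - p ∈ K := hKconv.segment_subset (hfK hxp) (hfK hzp) <| by
    simpa [neg_add_eq_sub] using (mem_segment_translate ℝ (-p)).mpr hu
  simpa [hγ.eq_zero_of_add_smul_mem hK hp hy hyp huK hupK] using hu

end AtMostTwoOnLines
end

def crossWith (p : ℝ × ℝ) : ℝ × ℝ →ₗ[ℝ] ℝ :=
  p.2 • LinearMap.fst ℝ ℝ ℝ - p.1 • LinearMap.snd ℝ ℝ ℝ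

theorem ker_crossWith_le {p : ℝ × ℝ} (hp : p ≠ 0) : LinearMap.ker (crossWith p) ≤ ℝ ∙ p := by
  obtain ⟨a, b⟩ := p
  rintro ⟨x, y⟩ hxy
  simp only [crossWith, LinearMap.mem_ker, LinearMap.sub_apply, LinearMap.smul_apply,
    LinearMap.fst_apply, LinearMap.snd_apply, smul_eq_mul] at hxy
  rw [Submodule.mem_span_singleton]
  have ha : a • (x, y) = x • (a, b) := Prod.ext (mul_comm a x) (by simp; linarith)
  have hb : b • (x, y) = y • (a, b) := Prod.ext (by simp; linarith) (mul_comm b y)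
  rcases eq_or_ne a 0 with rfl | ha₀
  · have hb₀ : b ≠ 0 := by rintro rfl; exact hp rfl
    exact ⟨b⁻¹ * y, by rw [mul_smul, ← hb, inv_smul_smul₀ hb₀]⟩
  · exact ⟨a⁻¹ * x, by rw [mul_smul, ← ha, inv_smul_smul₀ ha₀]⟩

theorem mem_uIcc_or_mem_uIcc_or_mem_uIcc {α : Type*} [LinearOrder α] (a b c : α) :
    b ∈ uIcc a c ∨ a ∈ uIcc b c ∨ c ∈ uIcc a b := by
  simp only [mem_uIcc]
  rcases le_total a b with h₁ | h₁ <;> rcases le_total b c with h₂ | h₂ <;>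
    rcases le_total a c with h₃ | h₃ <;> simp [*]

theorem stmt4_general (K : Set (ℝ × ℝ)) (hK : IsCompact K) (hKconv : Convex ℝ K)
    (γ : Set (ℝ × ℝ)) (hγ : γ = frontier K)
    (hline : ∀ a v : ℝ × ℝ, v ≠ 0 →
      ∀ x ∈ γ ∩ {q | ∃ t : ℝ, q = a + t • v}, ∀ y ∈ γ ∩ {q | ∃ t : ℝ, q = a + t • v},
      ∀ z ∈ γ ∩ {q | ∃ t : ℝ, q = a + t • v}, x = y ∨ x = z ∨ y = z)
    (p : ℝ × ℝ) (hp : p ≠ 0) :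
    ∀ x ∈ γ ∩ ((· + p) '' γ), ∀ y ∈ γ ∩ ((· + p) '' γ), ∀ z ∈ γ ∩ ((· + p) '' γ),
      x = y ∨ x = z ∨ y = z := by
  subst hγ
  change AtMostTwoOnLines (frontier K) at hline
  simp only [image_add_right, mem_inter_iff, mem_preimage, ← sub_eq_add_neg]
  rintro x ⟨hx, hxp⟩ y ⟨hy, hyp⟩ z ⟨hz, hzp⟩
  have hf := ker_crossWith_le hp
  rcases mem_uIcc_or_mem_uIcc_or_mem_uIcc (crossWith p x) (crossWith p y) (crossWith p z)
    with h | h | h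
  · exact hline.eq_or_eq_or_eq_of_mem_uIcc hK hKconv hp hf hx hxp hy hyp hz hzp h
  · rcases hline.eq_or_eq_or_eq_of_mem_uIcc hK hKconv hp hf hy hyp hx hxp hz hzp h
      with e | e | e <;> simp [e]
  · rcases hline.eq_or_eq_or_eq_of_mem_uIcc hK hKconv hp hf hx hxp hz hzp hy hyp h
      with e | e | e <;> simp [e]

/-- Lemma A.1: if `γ` is the boundary of a compact convex body in `ℝ²` meeting every
line in at most two points, then `γ ∩ (γ + p)` has at most two points for `p ≠ 0`. -/
theorem stmt4 (K : Set (ℝ × ℝ)) (hK : IsCompact K) (hKconv : Convex ℝ K)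
    (hKint : (interior K).Nonempty) (γ : Set (ℝ × ℝ)) (hγ : γ = frontier K)
    (hline : ∀ a v : ℝ × ℝ, v ≠ 0 →
      ∀ x ∈ γ ∩ {q | ∃ t : ℝ, q = a + t • v}, ∀ y ∈ γ ∩ {q | ∃ t : ℝ, q = a + t • v},
      ∀ z ∈ γ ∩ {q | ∃ t : ℝ, q = a + t • v}, x = y ∨ x = z ∨ y = z)
    (p : ℝ × ℝ) (hp : p ≠ 0) :
    ∀ x ∈ γ ∩ ((· + p) '' γ), ∀ y ∈ γ ∩ ((· + p) '' γ), ∀ z ∈ γ ∩ ((· + p) '' γ),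
      x = y ∨ x = z ∨ y = z :=
  stmt4_general K hK hKconv γ hγ hline p hp
end

section
/- Let γ be a closed convex curve in ℝ², invariant under q ↦ -q, meeting every line in at most two points, and let q₃ ∈ γ. Then the intersection γ ∩ (γ - q₃) contains exactly two points. -/
/-!
The points of `γ ∩ (γ - q₃)` are the feet `x` of the chords `[x, x + q₃]` of `K` with both ends
on `γ`.

Existence: `γ` is connected, and along `γ` the gauge of `x + q₃` runs from `0` at `x = -q₃` to
`2` at `x = q₃`, so it takes the value `1`; the central symmetry `x ↦ -(x + q₃)` yields a second
foot, distinct from the first because `γ` never contains both `x` and `2 • x`.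

Uniqueness: as `γ` contains no three collinear points, the chord of `K` in direction `q₃`
through a foot `y` is exactly `[y, y + q₃]`. Let `f` be a linear form with kernel `ℝ q₃`. If
`f y` lies between `f x` and `f z` for feet `x, z`, the matching convex combination of the
chords at `x` and `z` is a translate of `[0, q₃]` inside `K` on the line `y + ℝ q₃`, hence equals
`[y, y + q₃]`; so `y ∈ [x, z]`, and collinearity forces `y ∈ {x, z}`. Among any three reals one
lies between the other two, so there are at most two feet.
-/

open Set Topology Bornology Metric

def MeetsEachLineAtMostTwice {E : Type*} [AddCommGroup E] [Module ℝ E] (γ : Set E) : Prop :=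
  ∀ a v : E, v ≠ 0 → ∀ s t u : ℝ,
    a + s • v ∈ γ → a + t • v ∈ γ → a + u • v ∈ γ → s = t ∨ s = u ∨ t = u

theorem MeetsEachLineAtMostTwice.of_forall_mem_line {E : Type*} [AddCommGroup E] [Module ℝ E]
    {γ : Set E} (h : ∀ a v : E, v ≠ 0 →
      ∀ x ∈ γ ∩ {q | ∃ t : ℝ, q = a + t • v}, ∀ y ∈ γ ∩ {q | ∃ t : ℝ, q = a + t • v},
      ∀ z ∈ γ ∩ {q | ∃ t : ℝ, q = a + t • v}, x = y ∨ x = z ∨ y = z) :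
    MeetsEachLineAtMostTwice γ := fun a v hv s t u hs ht hu => by
  simpa [hv] using h a v hv _ ⟨hs, s, rfl⟩ _ ⟨ht, t, rfl⟩ _ ⟨hu, u, rfl⟩

theorem mem_segment_or_mem_segment_or_mem_segment {𝕜 : Type*} [Field 𝕜] [LinearOrder 𝕜]
    [IsStrictOrderedRing 𝕜] (a b c : 𝕜) :
    b ∈ segment 𝕜 a c ∨ a ∈ segment 𝕜 b c ∨ c ∈ segment 𝕜 a b := by
  simp only [segment_eq_uIcc, mem_uIcc]
  rcases le_total a b with h₁ | h₁ <;> rcases le_total b c with h₂ | h₂ <;>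
    rcases le_total a c with h₃ | h₃ <;> tauto

theorem add_smul_mem_openSegment {E : Type*} [AddCommGroup E] [Module ℝ E] (x v : E)
    {s t u : ℝ} (hst : s < t) (htu : t < u) :
    x + t • v ∈ openSegment ℝ (x + s • v) (x + u • v) := by
  have ht : t ∈ openSegment ℝ s u := by rw [openSegment_eq_Ioo (hst.trans htu)]; exact ⟨hst, htu⟩
  have := mem_image_of_mem (AffineMap.lineMap x (x + v) : ℝ →ᵃ[ℝ] E) ht
  simpa [image_openSegment, AffineMap.lineMap_apply, add_comm] using this

namespace MeetsEachLineAtMostTwice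

variable {E : Type*} [AddCommGroup E] [Module ℝ E] {γ : Set E}

theorem eq_zero_or_eq_one (hγ : MeetsEachLineAtMostTwice γ) {x v : E} (hv : v ≠ 0) {r : ℝ}
    (hx : x ∈ γ) (hxv : x + v ∈ γ) (hr : x + r • v ∈ γ) : r = 0 ∨ r = 1 := by
  have := hγ x v hv 0 1 r (by simpa using hx) (by simpa using hxv) hr
  norm_num at this
  tauto

theorem eq_or_eq_of_mem_segment (hγ : MeetsEachLineAtMostTwice γ) {x y z : E} (hx : x ∈ γ)
    (hy : y ∈ γ) (hz : z ∈ γ) (hxyz : y ∈ segment ℝ x z) : y = x ∨ y = z := by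
  rw [segment_eq_image'] at hxyz
  obtain ⟨θ, -, rfl⟩ := hxyz
  rcases eq_or_ne z x with rfl | hzx
  · simp
  rcases hγ x (z - x) (sub_ne_zero.2 hzx) 0 θ 1 (by simpa using hx) hy (by simpa using hz)
    with h | h | h
  · simp [← h]
  · norm_num at h
  · simp [h]

end MeetsEachLineAtMostTwice

section Chords

variable {E : Type*} [TopologicalSpace E] [AddCommGroup E] [IsTopologicalAddGroup E]
  [Module ℝ E] [ContinuousSMul ℝ E] {K : Set E}

theorem Convex.left_mem_frontier_of_mem_openSegment (hK : Convex ℝ K) {p q u : E}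
    (hp : p ∈ closure K) (hq : q ∈ closure K) (hu : u ∈ frontier K)
    (hupq : u ∈ openSegment ℝ p q) : p ∈ frontier K :=
  ⟨hp, fun hp' => hu.2 (hK.openSegment_interior_closure_subset_interior hp' hq hupq)⟩

theorem MeetsEachLineAtMostTwice.mem_Icc_of_add_smul_mem_closure
    (hγ : MeetsEachLineAtMostTwice (frontier K)) (hK : Convex ℝ K) {x v : E} (hv : v ≠ 0)
    (hx : x ∈ frontier K) (hxv : x + v ∈ frontier K) {r : ℝ} (hr : x + r • v ∈ closure K) :
    r ∈ Icc 0 1 := by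
  have hx' : x + (0 : ℝ) • v ∈ frontier K := by simpa using hx
  have hxv' : x + (1 : ℝ) • v ∈ frontier K := by simpa using hxv
  by_contra hr01
  suffices x + r • v ∈ frontier K by
    rcases hγ.eq_zero_or_eq_one hv hx hxv this with rfl | rfl <;> simp at hr01
  rcases lt_or_ge r 0 with hr0 | hr0
  · exact hK.left_mem_frontier_of_mem_openSegment hr (frontier_subset_closure hxv') hx'
      (add_smul_mem_openSegment x v hr0 one_pos)
  · have hr1 : 1 < r := by by_contra h; exact hr01 ⟨hr0, not_lt.1 h⟩
    refine hK.left_mem_frontier_of_mem_openSegment hr (frontier_subset_closure hx') hxv' ?_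
    rw [openSegment_symm]
    exact add_smul_mem_openSegment x v zero_lt_one hr1

theorem MeetsEachLineAtMostTwice.mem_segment_of_apply_mem_segment
    (hγ : MeetsEachLineAtMostTwice (frontier K)) (hK : Convex ℝ K) {v : E} (hv : v ≠ 0)
    (f : E →ₗ[ℝ] ℝ) (hf : LinearMap.ker f ≤ ℝ ∙ v) {x y z : E}
    (hx : x ∈ frontier K) (hxv : x + v ∈ frontier K) (hy : y ∈ frontier K)
    (hyv : y + v ∈ frontier K) (hz : z ∈ frontier K) (hzv : z + v ∈ frontier K)
    (hfy : f y ∈ segment ℝ (f x) (f z)) : y ∈ segment ℝ x z := by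
  obtain ⟨a, b, ha, hb, hab, hfy⟩ := hfy
  have hK' := hK.closure
  have hp : a • x + b • z ∈ closure K :=
    hK' (frontier_subset_closure hx) (frontier_subset_closure hz) ha hb hab
  have hpv : a • x + b • z + v ∈ closure K := by
    have h := hK' (frontier_subset_closure hxv) (frontier_subset_closure hzv) ha hb hab
    have e : a • (x + v) + b • (z + v) = a • x + b • z + (a + b) • v := by module
    rwa [e, hab, one_smul] at h
  obtain ⟨r, hr⟩ := Submodule.mem_span_singleton.1
    (hf (show a • x + b • z - y ∈ LinearMap.ker f by simp [← hfy]))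
  have hr₀ := hγ.mem_Icc_of_add_smul_mem_closure hK hv hy hyv (r := r)
    (by rwa [hr, add_sub_cancel])
  have hr₁ := hγ.mem_Icc_of_add_smul_mem_closure hK hv hy hyv (r := r + 1)
    (by rwa [add_smul, one_smul, ← add_assoc, hr, add_sub_cancel])
  have hr0 : r = 0 := le_antisymm (by linarith [hr₁.2]) hr₀.1
  rw [hr0, zero_smul, eq_comm, sub_eq_zero] at hr
  exact ⟨a, b, ha, hb, hab, hr⟩

theorem MeetsEachLineAtMostTwice.eq_or_eq_or_eq_of_add_mem_frontier
    (hγ : MeetsEachLineAtMostTwice (frontier K)) (hK : Convex ℝ K) {v : E} (hv : v ≠ 0)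
    (f : E →ₗ[ℝ] ℝ) (hf : LinearMap.ker f ≤ ℝ ∙ v) {x y z : E}
    (hx : x ∈ frontier K) (hxv : x + v ∈ frontier K) (hy : y ∈ frontier K)
    (hyv : y + v ∈ frontier K) (hz : z ∈ frontier K) (hzv : z + v ∈ frontier K) :
    x = y ∨ x = z ∨ y = z := by
  rcases mem_segment_or_mem_segment_or_mem_segment (f x) (f y) (f z) with h | h | h
  · have := hγ.eq_or_eq_of_mem_segment hx hy hz
      (hγ.mem_segment_of_apply_mem_segment hK hv f hf hx hxv hy hyv hz hzv h)
    tauto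
  · have := hγ.eq_or_eq_of_mem_segment hy hx hz
      (hγ.mem_segment_of_apply_mem_segment hK hv f hf hy hyv hx hxv hz hzv h)
    tauto
  · have := hγ.eq_or_eq_of_mem_segment hx hz hy
      (hγ.mem_segment_of_apply_mem_segment hK hv f hf hx hxv hz hzv hy hyv h)
    tauto

theorem MeetsEachLineAtMostTwice.frontier_inter_image_sub_eq_pair
    (hγ : MeetsEachLineAtMostTwice (frontier K)) (hK : Convex ℝ K) {v : E} (hv : v ≠ 0)
    (f : E →ₗ[ℝ] ℝ) (hf : LinearMap.ker f ≤ ℝ ∙ v) {a b : E} (hab : a ≠ b)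
    (ha : a ∈ frontier K) (hav : a + v ∈ frontier K) (hb : b ∈ frontier K)
    (hbv : b + v ∈ frontier K) : frontier K ∩ (· - v) '' frontier K = {a, b} := by
  ext c
  simp only [mem_inter_iff, mem_image, sub_eq_iff_eq_add, exists_eq_right, mem_insert_iff,
    mem_singleton_iff]
  constructor
  · rintro ⟨hc, hcv⟩
    have := hγ.eq_or_eq_or_eq_of_add_mem_frontier hK hv f hf hc hcv ha hav hb hbv
    tauto
  · rintro (rfl | rfl)
    exacts [⟨ha, hav⟩, ⟨hb, hbv⟩]

end Chords

section Symmetric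

variable {E : Type*} [TopologicalSpace E] [AddCommGroup E] [IsTopologicalAddGroup E] {K : Set E}

theorem neg_mem_frontier_of_neg_eq (hsym : -K = K) {x : E} (hx : x ∈ frontier K) :
    -x ∈ frontier K := by
  rw [← hsym]
  change -x ∈ frontier (Homeomorph.neg E ⁻¹' K)
  rw [← Homeomorph.preimage_frontier]
  simpa using hx

theorem Convex.mem_nhds_zero_of_neg_eq [Module ℝ E] [ContinuousSMul ℝ E] (hK : Convex ℝ K)
    (hsym : -K = K) (hne : (interior K).Nonempty) : K ∈ 𝓝 0 := by
  obtain ⟨p, hp⟩ := hne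
  have hnp : -p ∈ interior K := by
    rw [← hsym]
    change -p ∈ interior (Homeomorph.neg E ⁻¹' K)
    rw [← Homeomorph.preimage_interior]
    simpa using hp
  have := hK.interior hp hnp (by norm_num : (0 : ℝ) ≤ 1 / 2)
    (by norm_num : (0 : ℝ) ≤ 1 / 2) (by norm_num)
  rw [← smul_add, add_neg_cancel, smul_zero] at this
  exact mem_interior_iff_mem_nhds.1 this

end Symmetric

section Normed

variable {E : Type*} [NormedAddCommGroup E] [NormedSpace ℝ E] {K : Set E}

theorem Convex.isConnected_frontier (hE : 1 < Module.rank ℝ E) (hK : Convex ℝ K)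
    (hne : (interior K).Nonempty) (hb : IsBounded K) : IsConnected (frontier K) := by
  obtain ⟨e, -, -, he⟩ := exists_homeomorph_image_interior_closure_frontier_eq_unitBall hK hne hb
  have : frontier K = e.symm '' sphere 0 1 := by rw [← he, image_image]; simp
  rw [this]
  exact (isConnected_sphere hE 0 zero_le_one).image _ e.symm.continuous.continuousOn

theorem Convex.two_smul_notMem_frontier (hK : Convex ℝ K) (h0 : K ∈ 𝓝 0) {x : E}
    (hx : x ∈ frontier K) : (2 : ℝ) • x ∉ frontier K := by
  rw [← gauge_eq_one_iff_mem_frontier hK h0] at hx ⊢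
  rw [gauge_smul_of_nonneg zero_le_two, hx]
  norm_num

theorem Convex.exists_mem_frontier_add_mem_frontier (hE : 1 < Module.rank ℝ E)
    (hK : Convex ℝ K) (h0 : K ∈ 𝓝 0) (hb : IsBounded K) {v : E} (hv : v ∈ frontier K)
    (hnv : -v ∈ frontier K) : ∃ x ∈ frontier K, x + v ∈ frontier K := by
  have hconn := hK.isConnected_frontier hE ⟨0, mem_interior_iff_mem_nhds.2 h0⟩ hb
  have hcont : Continuous fun x => gauge K (x + v) :=
    (continuous_gauge hK h0).comp (continuous_add_const v)
  have hgv : gauge K (v + v) = 2 := by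
    rw [← two_smul ℝ v, gauge_smul_of_nonneg zero_le_two,
      (gauge_eq_one_iff_mem_frontier hK h0).2 hv]
    norm_num
  have h1 : (1 : ℝ) ∈ Icc (gauge K (-v + v)) (gauge K (v + v)) := by
    rw [neg_add_cancel, gauge_zero, hgv]
    norm_num
  obtain ⟨x, hx, hxv⟩ := hconn.isPreconnected.intermediate_value hnv hv hcont.continuousOn h1
  exact ⟨x, hx, (gauge_eq_one_iff_mem_frontier hK h0).1 hxv⟩

end Normed

theorem exists_ker_eq_span_singleton {k E : Type*} [Field k] [AddCommGroup E] [Module k E]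
    [FiniteDimensional k E] (hE : Module.finrank k E = 2) {v : E} (hv : v ≠ 0) :
    ∃ f : E →ₗ[k] k, LinearMap.ker f = k ∙ v := by
  have hq : Module.finrank k (E ⧸ k ∙ v) = Module.finrank k k := by
    have := (k ∙ v).finrank_quotient_add_finrank
    rw [finrank_span_singleton hv, hE] at this
    rw [Module.finrank_self]
    omega
  refine ⟨(LinearEquiv.ofFinrankEq _ _ hq).toLinearMap ∘ₗ (k ∙ v).mkQ, ?_⟩
  rw [LinearEquiv.ker_comp, Submodule.ker_mkQ]

/-- For a closed convex curve `γ` (boundary of a compact convex body symmetric about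
the origin) meeting every line in at most two points, and `q₃ ∈ γ`, the intersection
`γ ∩ (γ - q₃)` has exactly two points. -/
theorem stmt5 (K : Set (ℝ × ℝ)) (hK : IsCompact K) (hKconv : Convex ℝ K)
    (hKint : (interior K).Nonempty) (hKsym : ∀ q, q ∈ K ↔ -q ∈ K)
    (γ : Set (ℝ × ℝ)) (hγ : γ = frontier K)
    (hline : ∀ a v : ℝ × ℝ, v ≠ 0 →
      ∀ x ∈ γ ∩ {q | ∃ t : ℝ, q = a + t • v}, ∀ y ∈ γ ∩ {q | ∃ t : ℝ, q = a + t • v},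
      ∀ z ∈ γ ∩ {q | ∃ t : ℝ, q = a + t • v}, x = y ∨ x = z ∨ y = z)
    (q₃ : ℝ × ℝ) (hq₃ : q₃ ∈ γ) :
    ∃ a b : ℝ × ℝ, a ≠ b ∧ γ ∩ ((· - q₃) '' γ) = {a, b} := by
  subst hγ
  have hsym : -K = K := Set.ext fun q => (hKsym q).symm
  have h0 : K ∈ 𝓝 0 := hKconv.mem_nhds_zero_of_neg_eq hsym hKint
  have hq₃0 : q₃ ≠ 0 := by
    rintro rfl
    exact hq₃.2 (mem_interior_iff_mem_nhds.2 h0)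
  obtain ⟨f, hf⟩ := exists_ker_eq_span_singleton (k := ℝ) (by simp) hq₃0
  obtain ⟨a, ha, haq⟩ := hKconv.exists_mem_frontier_add_mem_frontier
    (by simp [one_add_one_eq_two]) h0 hK.isBounded hq₃ (neg_mem_frontier_of_neg_eq hsym hq₃)
  have hb := neg_mem_frontier_of_neg_eq hsym haq
  have hbq : -(a + q₃) + q₃ ∈ frontier K := by simpa using neg_mem_frontier_of_neg_eq hsym ha
  have hab : a ≠ -(a + q₃) := by
    intro h
    have h2a : (2 : ℝ) • a = -q₃ := by
      rw [two_smul]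
      nth_rewrite 1 [h]
      abel
    exact hKconv.two_smul_notMem_frontier h0 ha (h2a ▸ neg_mem_frontier_of_neg_eq hsym hq₃)
  have hγ := MeetsEachLineAtMostTwice.of_forall_mem_line hline
  exact ⟨a, _, hab, hγ.frontier_inter_image_sub_eq_pair hKconv hq₃0 f hf.le hab ha haq hb hbq⟩
end

section
/- Let ω > 0, a, b > 0, q(t) = (a cos(ωt), b sin(ωt)), and qᵢ(t) = q(t + 2π(i-1)/(3ω)) for i = 1,2,3. Then each qᵢ satisfies the coupled harmonic equations d²qᵢ/dt² = (ω²/3) Σ_{j≠i} (qⱼ - qᵢ), i.e. the motion is a solution of the equal-mass three-body problem with pairwise potential U(r) = (ω²/6) r². -/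
open Real

/-! The ellipse `t ↦ (a cos ωt, b sin ωt)` and its time shifts `qᵢ` all solve `q'' = -ω² q`.
The shifts are by thirds of the period, so in each coordinate the three phases differ by the
cube roots of unity, whose sum vanishes; hence `q₁ + q₂ + q₃ = 0`, which turns `-ω² qᵢ` into
`(ω²/3) Σ_{j≠i} (qⱼ - qᵢ)`. -/

theorem sum_exp_add_two_pi_mul_div_mul_I {n : ℕ} (hn : 1 < n) (x : ℝ) :
    ∑ k ∈ Finset.range n, Complex.exp ((x + 2 * π * k / n : ℝ) * Complex.I) = 0 := by
  have hζ := Complex.isPrimitiveRoot_exp n (by omega)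
  have hfactor (k : ℕ) : Complex.exp ((x + 2 * π * k / n : ℝ) * Complex.I)
      = Complex.exp (x * Complex.I) * Complex.exp (2 * π * Complex.I / n) ^ k := by
    rw [← Complex.exp_nat_mul, ← Complex.exp_add]
    push_cast
    ring_nf
  simp only [hfactor, ← Finset.mul_sum, hζ.geom_sum_eq_zero hn, mul_zero]

theorem sum_cos_add_two_pi_mul_div {n : ℕ} (hn : 1 < n) (x : ℝ) :
    ∑ k ∈ Finset.range n, cos (x + 2 * π * k / n) = 0 := by
  simpa only [Complex.re_sum, Complex.exp_ofReal_mul_I_re, Complex.zero_re] using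
    congrArg Complex.re (sum_exp_add_two_pi_mul_div_mul_I hn x)

theorem sum_sin_add_two_pi_mul_div {n : ℕ} (hn : 1 < n) (x : ℝ) :
    ∑ k ∈ Finset.range n, sin (x + 2 * π * k / n) = 0 := by
  simpa only [Complex.im_sum, Complex.exp_ofReal_mul_I_im, Complex.zero_im] using
    congrArg Complex.im (sum_exp_add_two_pi_mul_div_mul_I hn x)

noncomputable def ellipse (a b ω : ℝ) (t : ℝ) : ℝ × ℝ := (a * cos (ω * t), b * sin (ω * t))

theorem hasDerivAt_mul_cos_mul (c ω t : ℝ) :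
    HasDerivAt (fun t => c * cos (ω * t)) (-(c * ω) * sin (ω * t)) t :=
  (((hasDerivAt_id' t).const_mul ω).cos.const_mul c).congr_deriv (by ring)

theorem hasDerivAt_mul_sin_mul (c ω t : ℝ) :
    HasDerivAt (fun t => c * sin (ω * t)) (c * ω * cos (ω * t)) t :=
  (((hasDerivAt_id' t).const_mul ω).sin.const_mul c).congr_deriv (by ring)

theorem deriv_deriv_ellipse (a b ω t : ℝ) :
    deriv (deriv (ellipse a b ω)) t = -ω ^ 2 • ellipse a b ω t := by
  have hvelocity :
      deriv (ellipse a b ω) = fun s => (-(a * ω) * sin (ω * s), b * ω * cos (ω * s)) :=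
    funext fun s => ((hasDerivAt_mul_cos_mul a ω s).prodMk (hasDerivAt_mul_sin_mul b ω s)).deriv
  rw [hvelocity, ((hasDerivAt_mul_sin_mul _ ω t).prodMk (hasDerivAt_mul_cos_mul _ ω t)).deriv]
  ext <;> simp only [ellipse, Prod.smul_mk, smul_eq_mul] <;> ring

theorem sum_ellipse_add_phase {a b ω : ℝ} (hω : ω ≠ 0) {n : ℕ} (hn : 1 < n) (t : ℝ) :
    ∑ k ∈ Finset.range n, ellipse a b ω (t + 2 * π * k / (n * ω)) = 0 := by
  have hphase (k : ℕ) : ω * (t + 2 * π * k / (n * ω)) = ω * t + 2 * π * k / n := by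
    field_simp
  ext
  · simp [ellipse, hphase, Prod.fst_sum, ← Finset.mul_sum, sum_cos_add_two_pi_mul_div hn]
  · simp [ellipse, hphase, Prod.snd_sum, ← Finset.mul_sum, sum_sin_add_two_pi_mul_div hn]

theorem deriv_deriv_comp_add_const {𝕜 F : Type*} [NontriviallyNormedField 𝕜]
    [NormedAddCommGroup F] [NormedSpace 𝕜 F] (f : 𝕜 → F) (c x : 𝕜) :
    deriv (deriv fun t => f (t + c)) x = deriv (deriv f) (x + c) := by
  rw [funext fun t => deriv_comp_add_const (f := f) (a := c) (x := t), deriv_comp_add_const]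

theorem sum_erase_sub_eq_neg_card_smul {ι M : Type*} [Fintype ι] [DecidableEq ι] [AddCommGroup M]
    {x : ι → M} (hx : ∑ j, x j = 0) (i : ι) :
    ∑ j ∈ Finset.univ.erase i, (x j - x i) = -(Fintype.card ι • x i) := by
  rw [Finset.sum_erase _ (sub_self _), Finset.sum_sub_distrib, hx, Finset.sum_const,
    Finset.card_univ, zero_sub]

theorem stmt10_general (ω a b : ℝ) (hω : 0 < ω)
    (q : ℝ → ℝ × ℝ) (hq : q = fun t => (a * cos (ω * t), b * sin (ω * t)))
    (Q : Fin 3 → ℝ → ℝ × ℝ) (hQ : Q = fun i t => q (t + 2 * π * ((i : Fin 3) : ℕ) / (3 * ω))) :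
    ∀ i, ∀ t : ℝ,
      deriv (deriv (Q i)) t = (ω ^ 2 / 3) • ∑ j ∈ Finset.univ.erase i, (Q j t - Q i t) := by
  replace hq : q = ellipse a b ω := hq
  subst hq hQ
  intro i t
  have hbalance : ∑ j : Fin 3, ellipse a b ω (t + 2 * π * (j : ℕ) / (3 * ω)) = 0 := by
    rw [Fin.sum_univ_eq_sum_range (fun k => ellipse a b ω (t + 2 * π * k / (3 * ω)))]
    exact_mod_cast sum_ellipse_add_phase hω.ne' (by norm_num : 1 < 3) t
  rw [deriv_deriv_comp_add_const, deriv_deriv_ellipse, sum_erase_sub_eq_neg_card_smul hbalance,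
    Fintype.card_fin]
  module

/-- The choreography on the ellipse satisfies the coupled harmonic equations
`d²qᵢ/dt² = (ω²/3) Σ_{j≠i} (qⱼ - qᵢ)`, i.e. it solves the equal-mass three-body
problem with pairwise potential `U(r) = (ω²/6) r²`. -/
theorem stmt10 (ω a b : ℝ) (hω : 0 < ω) (ha : 0 < a) (hb : 0 < b)
    (q : ℝ → ℝ × ℝ) (hq : q = fun t => (a * cos (ω * t), b * sin (ω * t)))
    (Q : Fin 3 → ℝ → ℝ × ℝ) (hQ : Q = fun i t => q (t + 2 * π * ((i : Fin 3) : ℕ) / (3 * ω))) :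
    ∀ i, ∀ t : ℝ,
      deriv (deriv (Q i)) t = (ω ^ 2 / 3) • ∑ j ∈ Finset.univ.erase i, (Q j t - Q i t) :=
  stmt10_general ω a b hω q hq Q hQ
end

section
/- Let f : [0,1] → ℝ be C³ with f(0) = f(1) = 0, f > 0, f'' < 0, f''' < 0 on (0,1), f'(0) > 0 finite, and let a₀ ∈ (0,1) satisfy f'(a₀) = -f'(0). For a ∈ (0,1], set g(x,a) = f(-x) - f(x+a) + f(a) for x ∈ (-a, 0). Then: if 0 < a ≤ a₀, the equation g(x,a) = 0 has no solution in (-a,0); if a₀ < a < 1, it has exactly one solution x₀(a), which lies in (-a/2, 0); and if a = 1, the unique solution is x = -1/2. -/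
/-!
Fix `0 < a ≤ 1` and write `G = g(·, a)`. Then `G 0 = 0`, `G (-a/2) = f a` and
`G (-a - x) = 2 f a - G x`. Since `G'' x = f''(-x) - f''(x + a)` and `f''` is strictly
decreasing, `G` is strictly convex on `[-a/2, 0]`. Convexity between the endpoint values `f a ≥ 0`
and `0` gives `G < f a` on `(-a/2, 0)`, hence `G > f a` on `(-a, -a/2)` by the symmetry. So for
`a < 1`, where `f a > 0`, every zero lies in `(-a/2, 0)`, and for `a = 1` the only zero is `-1/2`.
On `[-a/2, 0]` the sign of the left derivative `G'(0) = f'(a₀) - f'(a)` decides: if it is `≤ 0`,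
every chord to `(0, 0)` has negative slope and `G > 0`; if it is `> 0`, `G` dips below `0` just
left of `0`, and the intermediate value theorem together with strict convexity gives exactly one
zero.
-/

open Set

theorem strictAntiOn_Icc_of_hasDerivWithinAt_neg {u u' : ℝ → ℝ} {p q : ℝ}
    (hu : ∀ x ∈ Icc p q, HasDerivWithinAt u (u' x) (Icc p q) x)
    (hneg : ∀ x ∈ Ioo p q, u' x < 0) : StrictAntiOn u (Icc p q) := by
  refine strictAntiOn_of_hasDerivWithinAt_neg (f' := u') (convex_Icc p q)
    (fun x hx => (hu x hx).continuousWithinAt) ?_ ?_ <;> rw [interior_Icc]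
  · exact fun x hx => (hu x (Ioo_subset_Icc_self hx)).mono Ioo_subset_Icc_self
  · exact hneg

theorem strictConvexOn_of_hasDerivWithinAt2_pos {D : Set ℝ} (hD : Convex ℝ D) {f f' f'' : ℝ → ℝ}
    (hf : ContinuousOn f D) (hf' : ∀ x ∈ interior D, HasDerivWithinAt f (f' x) (interior D) x)
    (hf'' : ∀ x ∈ interior D, HasDerivWithinAt f' (f'' x) (interior D) x)
    (hf''₀ : ∀ x ∈ interior D, 0 < f'' x) : StrictConvexOn ℝ D f := by
  have hmono : StrictMonoOn f' (interior D) :=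
    strictMonoOn_of_hasDerivWithinAt_pos hD.interior
      (fun x hx => (hf'' x hx).continuousWithinAt) (by rwa [interior_interior])
      (by rwa [interior_interior])
  exact (hmono.congr (deriv_eqOn isOpen_interior hf').symm).strictConvexOn_of_deriv hD hf

section ConvexZeros

variable {g : ℝ → ℝ} {p q d : ℝ}

theorem StrictConvexOn.lt_of_hasDerivWithinAt_nonpos (hg : StrictConvexOn ℝ (Icc p q) g)
    (hd : HasDerivWithinAt g d (Icc p q) q) (hd₀ : d ≤ 0) {x : ℝ} (hx : x ∈ Ico p q) :
    g q < g x := by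
  have hslope := hg.slope_lt_of_hasDerivWithinAt (Ico_subset_Icc_self hx)
    (right_mem_Icc.2 (hx.1.trans hx.2.le)) hx.2 hd
  rw [slope_def_field, div_lt_iff₀ (sub_pos.2 hx.2)] at hslope
  linarith [mul_nonpos_of_nonpos_of_nonneg hd₀ (sub_pos.2 hx.2).le]

theorem HasDerivWithinAt.exists_lt_of_pos (hd : HasDerivWithinAt g d (Icc p q) q) (hd₀ : 0 < d)
    (hpq : p < q) : ∃ x ∈ Ioo p q, g x < g q := by
  have hleft : HasDerivWithinAt g d (Iio q) q :=
    (hd.mono_of_mem_nhdsWithin (Icc_mem_nhdsLE hpq)).Iio_of_Iic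
  have hslope : ∀ᶠ x in nhdsWithin q (Iio q), slope g q x ∈ Ioi 0 :=
    (hasDerivWithinAt_iff_tendsto_slope' (show q ∉ Iio q from lt_irrefl q)).1 hleft
      (Ioi_mem_nhds hd₀)
  obtain ⟨x, hx, hxs⟩ := (Filter.Eventually.and (Ioo_mem_nhdsLT hpq) hslope).exists
  refine ⟨x, hx, ?_⟩
  rw [mem_Ioi, slope_def_field, div_pos_iff] at hxs
  rcases hxs with ⟨-, h⟩ | ⟨h, -⟩
  · linarith [hx.2]
  · linarith

theorem StrictConvexOn.existsUnique_eq_zero (hg : StrictConvexOn ℝ (Icc p q) g)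
    (hc : ContinuousOn g (Icc p q)) (hd : HasDerivWithinAt g d (Icc p q) q) (hd₀ : 0 < d)
    (hpq : p < q) (hp : 0 < g p) (hq : g q = 0) : ∃! x, x ∈ Ioo p q ∧ g x = 0 := by
  obtain ⟨b, hb, hgb⟩ := hd.exists_lt_of_pos hd₀ hpq
  obtain ⟨x, hx, hgx⟩ := intermediate_value_Ioo' hb.1.le (hc.mono (Icc_subset_Icc le_rfl hb.2.le))
    (show (0 : ℝ) ∈ Ioo (g b) (g p) from ⟨hq ▸ hgb, hp⟩)
  have hqmem : q ∈ Icc p q := right_mem_Icc.2 hpq.le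
  have neg_right : ∀ y ∈ Ioo p q, g y = 0 → ∀ z ∈ Ioo y q, g z ≠ 0 := fun y hy hgy z hz => by
    have := hg.lt_on_openSegment (Ioo_subset_Icc_self hy) hqmem hy.2.ne
      (by rwa [openSegment_eq_Ioo hy.2])
    rw [hgy, hq, max_self] at this
    exact this.ne
  refine ⟨x, ⟨⟨hx.1, hx.2.trans hb.2⟩, hgx⟩, fun y ⟨hy, hgy⟩ => ?_⟩
  rcases lt_trichotomy y x with hyx | rfl | hxy
  · exact absurd hgx (neg_right y hy hgy x ⟨hyx, hx.2.trans hb.2⟩)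
  · rfl
  · exact absurd hgy (neg_right x ⟨hx.1, hx.2.trans hb.2⟩ hgx y ⟨hxy, hy.2⟩)

end ConvexZeros

def gFun (f : ℝ → ℝ) (a x : ℝ) : ℝ := f (-x) - f (x + a) + f a

section GFun

variable {f f' f'' u u' : ℝ → ℝ} {a x : ℝ}

theorem gFun_zero (h0 : f 0 = 0) : gFun f a 0 = 0 := by
  simp [gFun, h0]

theorem gFun_neg_half : gFun f a (-a / 2) = f a := by
  unfold gFun; ring_nf

theorem gFun_neg_sub : gFun f a (-a - x) = 2 * f a - gFun f a x := by
  unfold gFun; ring_nf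

theorem hasDerivWithinAt_comp_neg_Icc
    (hu : ∀ x ∈ Icc (0 : ℝ) 1, HasDerivWithinAt u (u' x) (Icc 0 1) x)
    (ha : a ≤ 1) (hx : x ∈ Icc (-a) 0) :
    HasDerivWithinAt (fun y => u (-y)) (-u' (-x)) (Icc (-a) 0) x := by
  have hmaps : MapsTo (fun y : ℝ => -y) (Icc (-a) 0) (Icc 0 1) := fun y hy =>
    ⟨by linarith [hy.2], by linarith [hy.1]⟩
  exact ((hu (-x) (hmaps hx)).comp x (hasDerivWithinAt_neg x _) hmaps).congr_deriv (by ring)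

theorem hasDerivWithinAt_comp_add_const_Icc
    (hu : ∀ x ∈ Icc (0 : ℝ) 1, HasDerivWithinAt u (u' x) (Icc 0 1) x)
    (ha : a ≤ 1) (hx : x ∈ Icc (-a) 0) :
    HasDerivWithinAt (fun y => u (y + a)) (u' (x + a)) (Icc (-a) 0) x := by
  have hmaps : MapsTo (fun y : ℝ => y + a) (Icc (-a) 0) (Icc 0 1) := fun y hy =>
    ⟨by linarith [hy.1], by linarith [hy.2]⟩
  exact ((hu (x + a) (hmaps hx)).comp x ((hasDerivWithinAt_id x _).add_const a) hmaps).congr_deriv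
    (mul_one _)

theorem hasDerivWithinAt_gFun (hf : ∀ x ∈ Icc (0 : ℝ) 1, HasDerivWithinAt f (f' x) (Icc 0 1) x)
    (ha : a ≤ 1) (hx : x ∈ Icc (-a) 0) :
    HasDerivWithinAt (gFun f a) (-f' (-x) - f' (x + a)) (Icc (-a) 0) x :=
  ((hasDerivWithinAt_comp_neg_Icc hf ha hx).sub
    (hasDerivWithinAt_comp_add_const_Icc hf ha hx)).add_const (f a)

theorem continuousOn_gFun (hf : ∀ x ∈ Icc (0 : ℝ) 1, HasDerivWithinAt f (f' x) (Icc 0 1) x)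
    (ha : a ≤ 1) : ContinuousOn (gFun f a) (Icc (-a) 0) :=
  fun _ hx => (hasDerivWithinAt_gFun hf ha hx).continuousWithinAt

theorem Icc_neg_half_subset : Icc (-a / 2) 0 ⊆ Icc (-a) 0 :=
  fun _ hy => ⟨by linarith [hy.1, hy.2], hy.2⟩

theorem strictConvexOn_gFun (hf' : ∀ x ∈ Icc (0 : ℝ) 1, HasDerivWithinAt f (f' x) (Icc 0 1) x)
    (hf'' : ∀ x ∈ Icc (0 : ℝ) 1, HasDerivWithinAt f' (f'' x) (Icc 0 1) x)
    (hf''anti : StrictAntiOn f'' (Icc 0 1)) (ha : a ≤ 1) :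
    StrictConvexOn ℝ (Icc (-a / 2) 0) (gFun f a) := by
  have hIoo : Ioo (-a / 2) 0 ⊆ Icc (-a) 0 := Ioo_subset_Icc_self.trans Icc_neg_half_subset
  refine strictConvexOn_of_hasDerivWithinAt2_pos (f' := fun y => -f' (-y) - f' (y + a))
    (f'' := fun y => f'' (-y) - f'' (y + a)) (convex_Icc _ _)
    ((continuousOn_gFun hf' ha).mono Icc_neg_half_subset) ?_ ?_ ?_ <;> rw [interior_Icc]
  · exact fun y hy => (hasDerivWithinAt_gFun hf' ha (hIoo hy)).mono hIoo
  · refine fun y hy => (((hasDerivWithinAt_comp_neg_Icc hf'' ha (hIoo hy)).neg.sub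
      (hasDerivWithinAt_comp_add_const_Icc hf'' ha (hIoo hy))).congr_deriv (by ring)).mono hIoo
  · intro y hy
    obtain ⟨hy₁, hy₂⟩ := hy
    exact sub_pos.2 (hf''anti ⟨by linarith, by linarith⟩ ⟨by linarith, by linarith⟩ (by linarith))

section Zeros

variable (hg : StrictConvexOn ℝ (Icc (-a / 2) 0) (gFun f a)) (h0 : f 0 = 0)
include hg h0

theorem gFun_lt_of_mem_Ioo (hfa : 0 ≤ f a) (hx : x ∈ Ioo (-a / 2) 0) : gFun f a x < f a := by
  have hlt : -a / 2 < 0 := hx.1.trans hx.2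
  have := hg.lt_on_openSegment (left_mem_Icc.2 hlt.le) (right_mem_Icc.2 hlt.le) hlt.ne
    (by rwa [openSegment_eq_Ioo hlt])
  rwa [gFun_neg_half, gFun_zero h0, max_eq_left hfa] at this

theorem lt_gFun_of_mem_Ioo (hfa : 0 ≤ f a) (hx : x ∈ Ioo (-a) (-a / 2)) : f a < gFun f a x := by
  have := gFun_lt_of_mem_Ioo hg h0 hfa (x := -a - x) ⟨by linarith [hx.2], by linarith [hx.1]⟩
  rw [gFun_neg_sub] at this
  linarith

theorem mem_Ioo_of_gFun_eq_zero (hfa : 0 < f a) (hx : x ∈ Ioo (-a) 0) (hgx : gFun f a x = 0) :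
    x ∈ Ioo (-a / 2) 0 := by
  refine ⟨lt_of_not_ge fun hle => ?_, hx.2⟩
  rcases hle.lt_or_eq with hlt | rfl
  · linarith [lt_gFun_of_mem_Ioo hg h0 hfa.le ⟨hx.1, hlt⟩]
  · rw [gFun_neg_half] at hgx
    linarith

theorem gFun_ne_zero_of_deriv_nonpos {d : ℝ}
    (hd : HasDerivWithinAt (gFun f a) d (Icc (-a / 2) 0) 0)
    (hd₀ : d ≤ 0) (hfa : 0 < f a) (hx : x ∈ Ioo (-a) 0) : gFun f a x ≠ 0 := fun hgx => by
  have hx' := mem_Ioo_of_gFun_eq_zero hg h0 hfa hx hgx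
  have := hg.lt_of_hasDerivWithinAt_nonpos hd hd₀ ⟨hx'.1.le, hx'.2⟩
  rw [gFun_zero h0, hgx] at this
  exact lt_irrefl 0 this

theorem existsUnique_gFun_eq_zero_of_deriv_pos {d : ℝ} (ha : 0 < a)
    (hc : ContinuousOn (gFun f a) (Icc (-a / 2) 0))
    (hd : HasDerivWithinAt (gFun f a) d (Icc (-a / 2) 0) 0) (hd₀ : 0 < d) (hfa : 0 < f a) :
    ∃! x, x ∈ Ioo (-a) 0 ∧ gFun f a x = 0 := by
  obtain ⟨x, ⟨hx, hgx⟩, huniq⟩ := hg.existsUnique_eq_zero hc hd hd₀ (by linarith)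
    (by rwa [gFun_neg_half]) (gFun_zero h0)
  exact ⟨x, ⟨⟨by linarith [hx.1], hx.2⟩, hgx⟩,
    fun y ⟨hy, hgy⟩ => huniq y ⟨mem_Ioo_of_gFun_eq_zero hg h0 hfa hy hgy, hgy⟩⟩

theorem gFun_eq_zero_iff_of_eq_zero (hfa : f a = 0) (hx : x ∈ Ioo (-a) 0) :
    gFun f a x = 0 ↔ x = -a / 2 := by
  refine ⟨fun hgx => ?_, by rintro rfl; rw [gFun_neg_half, hfa]⟩
  by_contra hne
  rcases lt_or_gt_of_ne hne with hlt | hgt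
  · linarith [lt_gFun_of_mem_Ioo hg h0 hfa.ge ⟨hx.1, hlt⟩]
  · linarith [gFun_lt_of_mem_Ioo hg h0 hfa.ge ⟨hgt, hx.2⟩]

end Zeros

end GFun

theorem stmt16_general (f f' f'' f''' : ℝ → ℝ)
    (hf' : ∀ x ∈ Icc (0 : ℝ) 1, HasDerivWithinAt f (f' x) (Icc 0 1) x)
    (hf'' : ∀ x ∈ Icc (0 : ℝ) 1, HasDerivWithinAt f' (f'' x) (Icc 0 1) x)
    (hf''' : ∀ x ∈ Icc (0 : ℝ) 1, HasDerivWithinAt f'' (f''' x) (Icc 0 1) x)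
    (h0 : f 0 = 0) (h1 : f 1 = 0)
    (hpos : ∀ x ∈ Ioo (0 : ℝ) 1, 0 < f x)
    (hconc : ∀ x ∈ Ioo (0 : ℝ) 1, f'' x < 0)
    (h3neg : ∀ x ∈ Ioo (0 : ℝ) 1, f''' x < 0)
    (a₀ : ℝ) (ha₀ : a₀ ∈ Ioo (0 : ℝ) 1) (ha₀' : f' a₀ = -f' 0)
    (g : ℝ → ℝ → ℝ) (hgdef : g = fun x a => f (-x) - f (x + a) + f a) :
    (∀ a, 0 < a → a ≤ a₀ → ∀ x ∈ Ioo (-a) (0 : ℝ), g x a ≠ 0) ∧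
    (∀ a, a₀ < a → a < 1 →
      (∃! x, x ∈ Ioo (-a) (0 : ℝ) ∧ g x a = 0) ∧
      (∀ x ∈ Ioo (-a) (0 : ℝ), g x a = 0 → x ∈ Ioo (-a / 2) 0)) ∧
    (∀ x ∈ Ioo (-1 : ℝ) 0, (g x 1 = 0 ↔ x = -(1 / 2))) := by
  subst hgdef
  have hf'anti := strictAntiOn_Icc_of_hasDerivWithinAt_neg hf'' hconc
  have hconv : ∀ a ≤ 1, StrictConvexOn ℝ (Icc (-a / 2) 0) (gFun f a) := fun a ha =>
    strictConvexOn_gFun hf' hf'' (strictAntiOn_Icc_of_hasDerivWithinAt_neg hf''' h3neg) ha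
  have hderiv : ∀ a, 0 < a → a ≤ 1 →
      HasDerivWithinAt (gFun f a) (f' a₀ - f' a) (Icc (-a / 2) 0) 0 :=
    fun a ha ha₁ => ((hasDerivWithinAt_gFun hf' ha₁ ⟨by linarith, le_rfl⟩).mono
      Icc_neg_half_subset).congr_deriv (by simp [ha₀'])
  have ha₀mem : a₀ ∈ Icc (0 : ℝ) 1 := Ioo_subset_Icc_self ha₀
  refine ⟨fun a ha hle x hx => ?_, fun a hlt hlt₁ => ?_, fun x hx => ?_⟩
  · have ha₁ : a < 1 := hle.trans_lt ha₀.2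
    exact gFun_ne_zero_of_deriv_nonpos (hconv a ha₁.le) h0 (hderiv a ha ha₁.le)
      (sub_nonpos.2 (hf'anti.antitoneOn ⟨ha.le, ha₁.le⟩ ha₀mem hle)) (hpos a ⟨ha, ha₁⟩) hx
  · have ha : 0 < a := ha₀.1.trans hlt
    have hfa : 0 < f a := hpos a ⟨ha, hlt₁⟩
    exact ⟨existsUnique_gFun_eq_zero_of_deriv_pos (hconv a hlt₁.le) h0 ha
        ((continuousOn_gFun hf' hlt₁.le).mono Icc_neg_half_subset) (hderiv a ha hlt₁.le)
        (sub_pos.2 (hf'anti ha₀mem ⟨ha.le, hlt₁.le⟩ hlt)) hfa,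
      fun x hx hgx => mem_Ioo_of_gFun_eq_zero (hconv a hlt₁.le) h0 hfa hx hgx⟩
  · rw [← neg_div]
    exact gFun_eq_zero_iff_of_eq_zero (hconv 1 le_rfl) h0 h1 hx

/-- Zeros of `g(x,a) = f(-x) - f(x+a) + f(a)` on `(-a, 0)`: none for `0 < a ≤ a₀`;
exactly one, lying in `(-a/2, 0)`, for `a₀ < a < 1`; and exactly `x = -1/2` for
`a = 1`. Here `a₀ ∈ (0,1)` is defined by `f'(a₀) = -f'(0)`. -/
theorem stmt16 (f f' f'' f''' : ℝ → ℝ)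
    (hf' : ∀ x ∈ Icc (0 : ℝ) 1, HasDerivWithinAt f (f' x) (Icc 0 1) x)
    (hf'' : ∀ x ∈ Icc (0 : ℝ) 1, HasDerivWithinAt f' (f'' x) (Icc 0 1) x)
    (hf''' : ∀ x ∈ Icc (0 : ℝ) 1, HasDerivWithinAt f'' (f''' x) (Icc 0 1) x)
    (h0 : f 0 = 0) (h1 : f 1 = 0)
    (hpos : ∀ x ∈ Ioo (0 : ℝ) 1, 0 < f x)
    (hconc : ∀ x ∈ Ioo (0 : ℝ) 1, f'' x < 0)
    (h3neg : ∀ x ∈ Ioo (0 : ℝ) 1, f''' x < 0)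
    (hf'0 : 0 < f' 0)
    (a₀ : ℝ) (ha₀ : a₀ ∈ Ioo (0 : ℝ) 1) (ha₀' : f' a₀ = -f' 0)
    (g : ℝ → ℝ → ℝ) (hgdef : g = fun x a => f (-x) - f (x + a) + f a) :
    (∀ a, 0 < a → a ≤ a₀ → ∀ x ∈ Ioo (-a) (0 : ℝ), g x a ≠ 0) ∧
    (∀ a, a₀ < a → a < 1 →
      (∃! x, x ∈ Ioo (-a) (0 : ℝ) ∧ g x a = 0) ∧
      (∀ x ∈ Ioo (-a) (0 : ℝ), g x a = 0 → x ∈ Ioo (-a / 2) 0)) ∧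
    (∀ x ∈ Ioo (-1 : ℝ) 0, (g x 1 = 0 ↔ x = -(1 / 2))) :=
  stmt16_general f f' f'' f''' hf' hf'' hf''' h0 h1 hpos hconc h3neg a₀ ha₀ ha₀' g hgdef
end

section
/- Under the hypotheses of the previous statement, for a₀ < a ≤ 1 let x₀(a) ∈ (-a/2, 0) be the unique zero of g(·,a). Then ∂g/∂x(x₀(a), a) = -f'(-x₀(a)) - f'(x₀(a)+a) < 0, and the implicit function x₀(a) is differentiable with dx₀/da < 0 for a₀ < a ≤ 1, i.e. x₀ is strictly decreasing. -/
/-!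
Write `h(y) = f(-y) - f(y + a) + f(a)`, so `h(x₀) = h(0) = 0`. On `(x₀, 0)` we have
`-y < y + a`, hence `h''(y) = f''(-y) - f''(y + a) > 0` because `f''` is decreasing, and Rolle's
theorem gives `h'(x₀) < 0`. The implicit function theorem then produces a differentiable branch
of zeros through `(a, x₀(a))` with slope `-∂ₐg / ∂ₓg`, where `∂ₐg = f'(a) - f'(x₀ + a) < 0` by
concavity; by uniqueness of the zero this branch is `x₀`. For `a = 1` the implicit function
theorem needs `f` on a neighbourhood of `1`, so `f` is first continued past `1` by its tangent line.
-/

open Set Filter Topology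

noncomputable def extendByTangent (f f' : ℝ → ℝ) (c t : ℝ) : ℝ :=
  if t ≤ c then f t else f c + f' c * (t - c)

section extendByTangent

variable {f f' : ℝ → ℝ} {l c t : ℝ}

theorem extendByTangent_of_le (h : t ≤ c) : extendByTangent f f' c t = f t := if_pos h

theorem extendByTangent_of_ge (h : c ≤ t) :
    extendByTangent f f' c t = f c + f' c * (t - c) := by
  rcases h.eq_or_lt with rfl | h
  · simp [extendByTangent]
  · exact if_neg h.not_ge

theorem hasDerivAt_tangentLine (f f' : ℝ → ℝ) (c t : ℝ) :
    HasDerivAt (fun s => f c + f' c * (s - c)) (f' c) t := by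
  simpa using (((hasDerivAt_id t).sub_const c).const_mul (f' c)).const_add (f c)

theorem hasDerivAt_extendByTangent_self (hlc : l < c)
    (hf : HasDerivWithinAt f (f' c) (Icc l c) c) :
    HasDerivAt (extendByTangent f f' c) (f' c) c := by
  have hleft : HasDerivWithinAt (extendByTangent f f' c) (f' c) (Iic c) c :=
    (hf.mono_of_mem_nhdsWithin (Icc_mem_nhdsLE hlc)).congr (fun _ => extendByTangent_of_le)
      (extendByTangent_of_le le_rfl)
  have hright : HasDerivWithinAt (extendByTangent f f' c) (f' c) (Ici c) c :=
    (hasDerivAt_tangentLine f f' c c).hasDerivWithinAt.congr (fun _ => extendByTangent_of_ge)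
      (extendByTangent_of_ge le_rfl)
  simpa [Iic_union_Ici] using hleft.union hright

theorem hasDerivAt_extendByTangent
    (hf : ∀ s ∈ Icc l c, HasDerivWithinAt f (f' s) (Icc l c) s) (ht : l < t) :
    HasDerivAt (extendByTangent f f' c) (f' (min t c)) t := by
  rcases lt_trichotomy t c with htc | rfl | htc
  · rw [min_eq_left htc.le]
    exact ((hf t ⟨ht.le, htc.le⟩).hasDerivAt (Icc_mem_nhds ht htc)).congr_of_eventuallyEq <|
      eventually_le_nhds htc |>.mono fun _ => extendByTangent_of_le
  · rw [min_self]
    exact hasDerivAt_extendByTangent_self ht (hf t ⟨ht.le, le_rfl⟩)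
  · rw [min_eq_right htc.le]
    exact (hasDerivAt_tangentLine f f' c t).congr_of_eventuallyEq <|
      eventually_ge_nhds htc |>.mono fun _ => extendByTangent_of_ge

theorem hasStrictDerivAt_extendByTangent
    (hf : ∀ s ∈ Icc l c, HasDerivWithinAt f (f' s) (Icc l c) s)
    (hf' : ContinuousOn f' (Icc l c)) (ht : t ∈ Ioc l c) :
    HasStrictDerivAt (extendByTangent f f' c) (f' t) t := by
  have hcont : ContinuousOn (fun s => f' (min s c)) (Ioi l) :=
    hf'.comp (continuous_id.min continuous_const).continuousOn
      fun s hs => ⟨le_min (le_of_lt hs) (ht.1.trans_le ht.2).le, min_le_right s c⟩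
  simpa [min_eq_left ht.2] using hasStrictDerivAt_of_hasDerivAt_of_continuousAt
    (eventually_gt_nhds ht.1 |>.mono fun _ => hasDerivAt_extendByTangent hf)
    (hcont.continuousAt (Ioi_mem_nhds ht.1))

end extendByTangent

theorem HasStrictFDerivAt.exists_hasDerivAt_implicit {G : ℝ × ℝ → ℝ} {a x ga gx : ℝ}
    (hG : HasStrictFDerivAt G
      (ga • ContinuousLinearMap.fst ℝ ℝ ℝ + gx • ContinuousLinearMap.snd ℝ ℝ ℝ) (a, x))
    (hgx : gx ≠ 0) :
    ∃ ψ : ℝ → ℝ, HasDerivAt ψ (-(ga / gx)) a ∧ ψ a = x ∧ ∀ᶠ b in 𝓝 a, G (b, ψ b) = G (a, x) := by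
  set L := ga • ContinuousLinearMap.fst ℝ ℝ ℝ + gx • ContinuousLinearMap.snd ℝ ℝ ℝ
  have hinr : L ∘L .inr ℝ ℝ ℝ = gx • .id ℝ ℝ := by ext; simp [L]
  have hinv : (L ∘L .inr ℝ ℝ ℝ).IsInvertible :=
    .of_inverse (g := gx⁻¹ • .id ℝ ℝ) (by ext; simp [hinr, hgx]) (by ext; simp [hinr, hgx])
  refine ⟨hG.implicitFunctionOfProdDomain hinv, ?_,
    (hG.eventually_apply_eq_iff_implicitFunctionOfProdDomain hinv).self_of_nhds.mp rfl,
    hG.eventually_apply_implicitFunctionOfProdDomain hinv⟩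
  have hψ := (hG.hasStrictFDerivAt_implicitFunctionOfProdDomain hinv).hasFDerivAt.hasDerivAt
  have hga : (L ∘L .inr ℝ ℝ ℝ).inverse ga = ga / gx := by
    rw [hinv.inverse_apply_eq, hinr]; simp [field]
  have hL : L (1, 0) = ga := by simp [L]
  simpa [hL, hga] using hψ

theorem hasStrictFDerivAt_neg_snd_sub_add {F : ℝ → ℝ} {a x d₁ d₂ d₃ : ℝ}
    (h₁ : HasStrictDerivAt F d₁ (-x)) (h₂ : HasStrictDerivAt F d₂ (x + a))
    (h₃ : HasStrictDerivAt F d₃ a) :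
    HasStrictFDerivAt (fun p : ℝ × ℝ => F (-p.2) - F (p.2 + p.1) + F p.1)
      ((d₃ - d₂) • ContinuousLinearMap.fst ℝ ℝ ℝ + (-d₁ - d₂) • ContinuousLinearMap.snd ℝ ℝ ℝ)
      (a, x) := by
  have e₁ := h₁.comp_hasStrictFDerivAt (f := fun p : ℝ × ℝ => -p.2) (a, x)
    (hasStrictFDerivAt_snd (𝕜 := ℝ)).fun_neg
  have e₂ := h₂.comp_hasStrictFDerivAt (f := fun p : ℝ × ℝ => p.2 + p.1) (a, x)
    ((hasStrictFDerivAt_snd (𝕜 := ℝ)).fun_add hasStrictFDerivAt_fst)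
  have e₃ := h₃.comp_hasStrictFDerivAt (f := fun p : ℝ × ℝ => p.1) (a, x)
    (hasStrictFDerivAt_fst (𝕜 := ℝ))
  refine ((e₁.fun_sub e₂).fun_add e₃).congr_fderiv ?_
  ext <;> simp; ring

theorem strictAntiOn_Icc_of_hasDerivWithinAt_neg_s17 {φ φ' : ℝ → ℝ} {l u : ℝ}
    (hφ : ∀ t ∈ Icc l u, HasDerivWithinAt φ (φ' t) (Icc l u) t)
    (hneg : ∀ t ∈ Ioo l u, φ' t < 0) : StrictAntiOn φ (Icc l u) := by
  refine strictAntiOn_of_hasDerivWithinAt_neg (convex_Icc l u)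
    (fun t ht => (hφ t ht).continuousWithinAt) ?_ (by rwa [interior_Icc])
  rw [interior_Icc]
  exact fun t ht => (hφ t (Ioo_subset_Icc_self ht)).mono Ioo_subset_Icc_self

theorem lt_zero_of_strictMonoOn_deriv_of_eq {h h' : ℝ → ℝ} {p q : ℝ} (hpq : p < q)
    (hc : ContinuousOn h (Icc p q)) (hd : ∀ y ∈ Ioo p q, HasDerivAt h (h' y) y)
    (hmono : StrictMonoOn h' (Icc p q)) (heq : h p = h q) : h' p < 0 := by
  obtain ⟨c, hc, hc0⟩ := exists_hasDerivAt_eq_zero hpq hc heq hd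
  exact hc0 ▸ hmono (left_mem_Icc.mpr hpq.le) (Ioo_subset_Icc_self hc) hc.1

theorem neg_deriv_sub_deriv_lt_zero {f f' f'' : ℝ → ℝ} {a x : ℝ}
    (hf : ∀ t ∈ Icc (0 : ℝ) 1, HasDerivWithinAt f (f' t) (Icc 0 1) t)
    (hf' : ∀ t ∈ Icc (0 : ℝ) 1, HasDerivWithinAt f' (f'' t) (Icc 0 1) t)
    (hf'' : StrictAntiOn f'' (Icc 0 1)) (h0 : f 0 = 0) (ha : a ≤ 1) (hx : x ∈ Ioo (-a / 2) 0)
    (hzero : f (-x) - f (x + a) + f a = 0) :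
    -f' (-x) - f' (x + a) < 0 := by
  obtain ⟨hx₁, hx₂⟩ := hx
  have hIcc : ∀ y ∈ Icc x 0, -y ∈ Icc (0 : ℝ) 1 ∧ y + a ∈ Icc (0 : ℝ) 1 := fun y ⟨hy₁, hy₂⟩ =>
    ⟨⟨by linarith, by linarith⟩, ⟨by linarith, by linarith⟩⟩
  have hIoo : ∀ y ∈ Ioo x 0, -y ∈ Ioo (0 : ℝ) 1 ∧ y + a ∈ Ioo (0 : ℝ) 1 := fun y ⟨hy₁, hy₂⟩ =>
    ⟨⟨by linarith, by linarith⟩, ⟨by linarith, by linarith⟩⟩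
  have hcont : ∀ {φ φ' : ℝ → ℝ}, (∀ t ∈ Icc (0 : ℝ) 1, HasDerivWithinAt φ (φ' t) (Icc 0 1) t) →
      ContinuousOn (fun y => φ (-y)) (Icc x 0) ∧ ContinuousOn (fun y => φ (y + a)) (Icc x 0) :=
    fun hφ => ⟨(HasDerivWithinAt.continuousOn hφ).comp continuousOn_neg fun y hy => (hIcc y hy).1,
      (HasDerivWithinAt.continuousOn hφ).comp (continuousOn_id.add continuousOn_const)
        fun y hy => (hIcc y hy).2⟩
  have hderiv : ∀ {φ φ' : ℝ → ℝ}, (∀ t ∈ Icc (0 : ℝ) 1, HasDerivWithinAt φ (φ' t) (Icc 0 1) t) →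
      ∀ y ∈ Ioo x 0, HasDerivAt (fun z => φ (-z)) (-φ' (-y)) y ∧
        HasDerivAt (fun z => φ (z + a)) (φ' (y + a)) y := by
    intro φ φ' hφ y hy
    obtain ⟨⟨h₁, h₁'⟩, ⟨h₂, h₂'⟩⟩ := hIoo y hy
    have hφ₁ := (hφ _ ⟨h₁.le, h₁'.le⟩).hasDerivAt (Icc_mem_nhds h₁ h₁')
    have hφ₂ := (hφ _ ⟨h₂.le, h₂'.le⟩).hasDerivAt (Icc_mem_nhds h₂ h₂')
    exact ⟨by simpa [Function.comp_def] using hφ₁.comp y (hasDerivAt_neg y),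
      hφ₂.comp_add_const y a⟩
  have hmono : StrictMonoOn (fun y => -f' (-y) - f' (y + a)) (Icc x 0) := by
    refine strictMonoOn_of_hasDerivWithinAt_pos (convex_Icc x 0)
      (f' := fun y => f'' (-y) - f'' (y + a)) ((hcont hf').1.neg.sub (hcont hf').2) ?_ ?_
      <;> rw [interior_Icc] <;> intro y hy
    · obtain ⟨h₁, h₂⟩ := hderiv hf' y hy
      simpa using (h₁.fun_neg.fun_sub h₂).hasDerivWithinAt
    · have hlt := hf'' (Ioo_subset_Icc_self (hIoo y hy).1) (Ioo_subset_Icc_self (hIoo y hy).2)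
        (by linarith [hy.1])
      exact sub_pos.mpr hlt
  refine lt_zero_of_strictMonoOn_deriv_of_eq hx₂ (h := fun y => f (-y) - f (y + a) + f a)
    (h' := fun y => -f' (-y) - f' (y + a)) (((hcont hf).1.sub (hcont hf).2).add continuousOn_const)
    (fun y hy => ((hderiv hf y hy).1.fun_sub (hderiv hf y hy).2).add_const _) hmono ?_
  simp [hzero, h0]

theorem hasDerivWithinAt_of_unique_zero {f f' x₀ : ℝ → ℝ} {s : Set ℝ} {a : ℝ}
    (hf : ∀ t ∈ Icc (0 : ℝ) 1, HasDerivWithinAt f (f' t) (Icc 0 1) t)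
    (hf'c : ContinuousOn f' (Icc 0 1)) (hs : s ⊆ Iic 1) (ha : a ∈ s)
    (hx : x₀ a ∈ Ioo (-a) 0) (hzero : f (-x₀ a) - f (x₀ a + a) + f a = 0)
    (huniq : ∀ b ∈ s, ∀ y ∈ Ioo (-b) 0, f (-y) - f (y + b) + f b = 0 → y = x₀ b)
    (hgx : -f' (-x₀ a) - f' (x₀ a + a) ≠ 0) :
    HasDerivWithinAt x₀ (-((f' a - f' (x₀ a + a)) / (-f' (-x₀ a) - f' (x₀ a + a)))) s a := by
  obtain ⟨hx₁, hx₂⟩ := hx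
  have ha₁ : a ≤ 1 := hs ha
  set E := extendByTangent f f' 1
  have hE : ∀ t ∈ Ioc (0 : ℝ) 1, HasStrictDerivAt E (f' t) t :=
    fun t ht => hasStrictDerivAt_extendByTangent hf hf'c ht
  have hEf : ∀ b ≤ 1, ∀ y ∈ Ioo (-b) 0, E (-y) - E (y + b) + E b = f (-y) - f (y + b) + f b := by
    rintro b hb y ⟨hy₁, hy₂⟩
    simp only [E, extendByTangent_of_le hb, extendByTangent_of_le (by linarith : -y ≤ 1),
      extendByTangent_of_le (by linarith : y + b ≤ 1)]
  obtain ⟨ψ, hψ, hψa, hψzero⟩ := (hasStrictFDerivAt_neg_snd_sub_add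
    (hE _ ⟨by linarith, by linarith⟩) (hE _ ⟨by linarith, by linarith⟩)
    (hE _ ⟨by linarith, ha₁⟩)).exists_hasDerivAt_implicit hgx
  have hψ₁ : ∀ᶠ b in 𝓝 a, -b < ψ b :=
    continuousAt_neg.eventually_lt hψ.continuousAt (by rwa [hψa])
  have hψ₂ : ∀ᶠ b in 𝓝 a, ψ b < 0 :=
    hψ.continuousAt.eventually_lt continuousAt_const (by rwa [hψa])
  refine hψ.hasDerivWithinAt.congr_of_eventuallyEq ?_ hψa.symm
  filter_upwards [self_mem_nhdsWithin, nhdsWithin_le_nhds (hψzero.and (hψ₁.and hψ₂))]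
    with b hb ⟨hbzero, hb₁, hb₂⟩
  refine (huniq b hb (ψ b) ⟨hb₁, hb₂⟩ ?_).symm
  rw [← hEf b (hs hb) _ ⟨hb₁, hb₂⟩]
  simpa [hEf a ha₁ _ ⟨hx₁, hx₂⟩, hzero] using hbzero

theorem stmt17_general (f f' f'' f''' : ℝ → ℝ)
    (hf' : ∀ x ∈ Icc (0 : ℝ) 1, HasDerivWithinAt f (f' x) (Icc 0 1) x)
    (hf'' : ∀ x ∈ Icc (0 : ℝ) 1, HasDerivWithinAt f' (f'' x) (Icc 0 1) x)
    (hf''' : ∀ x ∈ Icc (0 : ℝ) 1, HasDerivWithinAt f'' (f''' x) (Icc 0 1) x)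
    (h0 : f 0 = 0)
    (hconc : ∀ x ∈ Ioo (0 : ℝ) 1, f'' x < 0)
    (h3neg : ∀ x ∈ Ioo (0 : ℝ) 1, f''' x < 0)
    (a₀ : ℝ)
    (g : ℝ → ℝ → ℝ) (hgdef : g = fun x a => f (-x) - f (x + a) + f a)
    (x₀ : ℝ → ℝ)
    (hx₀ : ∀ a ∈ Ioc a₀ 1, x₀ a ∈ Ioo (-a / 2) 0 ∧ g (x₀ a) a = 0 ∧
      ∀ x ∈ Ioo (-a) (0 : ℝ), g x a = 0 → x = x₀ a) :
    ∀ a ∈ Ioc a₀ 1,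
      (-f' (-(x₀ a)) - f' (x₀ a + a) < 0) ∧
      ∃ d : ℝ, HasDerivWithinAt x₀ d (Ioc a₀ 1) a ∧ d < 0 := by
  subst hgdef
  intro a ha
  obtain ⟨⟨hx₁, hx₂⟩, hzero, -⟩ := hx₀ a ha
  have hgx : -f' (-x₀ a) - f' (x₀ a + a) < 0 :=
    neg_deriv_sub_deriv_lt_zero hf' hf'' (strictAntiOn_Icc_of_hasDerivWithinAt_neg_s17 hf''' h3neg)
      h0 ha.2 ⟨hx₁, hx₂⟩ hzero
  have hga : f' a - f' (x₀ a + a) < 0 :=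
    sub_neg.mpr <| strictAntiOn_Icc_of_hasDerivWithinAt_neg_s17 hf'' hconc
      ⟨by linarith, by linarith [ha.2]⟩ ⟨by linarith, ha.2⟩ (by linarith)
  refine ⟨hgx, _, hasDerivWithinAt_of_unique_zero hf' (HasDerivWithinAt.continuousOn hf'')
    Ioc_subset_Iic_self ha ⟨by linarith, hx₂⟩ hzero (fun b hb => (hx₀ b hb).2.2) hgx.ne,
    neg_neg_of_pos (div_pos_of_neg_of_neg hga hgx)⟩

/-- For `a₀ < a ≤ 1`, at the unique zero `x₀(a) ∈ (-a/2, 0)` of `g(·,a)`, the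
partial derivative `∂g/∂x = -f'(-x₀) - f'(x₀+a)` is negative, and `x₀` is
differentiable with `dx₀/da < 0`, i.e. strictly decreasing. -/
theorem stmt17 (f f' f'' f''' : ℝ → ℝ)
    (hf' : ∀ x ∈ Icc (0 : ℝ) 1, HasDerivWithinAt f (f' x) (Icc 0 1) x)
    (hf'' : ∀ x ∈ Icc (0 : ℝ) 1, HasDerivWithinAt f' (f'' x) (Icc 0 1) x)
    (hf''' : ∀ x ∈ Icc (0 : ℝ) 1, HasDerivWithinAt f'' (f''' x) (Icc 0 1) x)
    (h0 : f 0 = 0) (h1 : f 1 = 0)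
    (hpos : ∀ x ∈ Ioo (0 : ℝ) 1, 0 < f x)
    (hconc : ∀ x ∈ Ioo (0 : ℝ) 1, f'' x < 0)
    (h3neg : ∀ x ∈ Ioo (0 : ℝ) 1, f''' x < 0)
    (hf'0 : 0 < f' 0)
    (a₀ : ℝ) (ha₀ : a₀ ∈ Ioo (0 : ℝ) 1) (ha₀' : f' a₀ = -f' 0)
    (g : ℝ → ℝ → ℝ) (hgdef : g = fun x a => f (-x) - f (x + a) + f a)
    (x₀ : ℝ → ℝ)
    (hx₀ : ∀ a ∈ Ioc a₀ 1, x₀ a ∈ Ioo (-a / 2) 0 ∧ g (x₀ a) a = 0 ∧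
      ∀ x ∈ Ioo (-a) (0 : ℝ), g x a = 0 → x = x₀ a) :
    ∀ a ∈ Ioc a₀ 1,
      (-f' (-(x₀ a)) - f' (x₀ a + a) < 0) ∧
      ∃ d : ℝ, HasDerivWithinAt x₀ d (Ioc a₀ 1) a ∧ d < 0 :=
  stmt17_general f f' f'' f''' hf' hf'' hf''' h0 hconc h3neg a₀ g hgdef x₀ hx₀
end
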